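/- Let t, T be positive integers with 2t/3 < T ≤ t. Then the optimal redundancy of a (Δ_T, t)-FCC satisfies r_{Δ_T}(k,t) ≤ 3t. -/
import Mathlib

open Finset

lemma hd_comp_equiv {n m : ℕ} (σ : Fin n ≃ Fin m) (x y : Fin m → ZMod 2) :
    hammingDist (x ∘ σ) (y ∘ σ) = hammingDist x y := by
  unfold hammingDist
  apply Finset.card_bij (fun i _ => σ i)
  · intro a ha; simp_all
  · intro a _ b _ h; exact σ.injective h
  · intro b hb; exact ⟨σ.symm b, by simp_all, by simp⟩

lemma hd_append {m n : ℕ} (a c : Fin m → ZMod 2) (b d : Fin n → ZMod 2) :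
    hammingDist (Fin.append a b) (Fin.append c d) = hammingDist a c + hammingDist b d := by
  unfold hammingDist
  rw [Finset.card_filter, Finset.card_filter, Finset.card_filter, Fin.sum_univ_add]
  simp [Fin.append_left, Fin.append_right]

lemma hd_const {n : ℕ} {a b : ZMod 2} (h : a ≠ b) :
    hammingDist (fun _ : Fin n => a) (fun _ : Fin n => b) = n := by
  unfold hammingDist
  simp [Finset.filter_true_of_mem, h]

lemma norm_le_norm_add_dist {n : ℕ} (u v : Fin n → ZMod 2) :
    hammingNorm v ≤ hammingNorm u + hammingDist u v := by
  rw [← hammingDist_zero_right, ← hammingDist_zero_right, hammingDist_comm u 0,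
    hammingDist_comm v 0]
  exact hammingDist_triangle 0 u v

/-- For 2t/3 < T ≤ t, the optimal redundancy of a (Δ_T, t)-FCC is at most 3t:
there exists a systematic encoding with redundancy 3t protecting Δ_T against t errors. -/
theorem stmt_15 {k t T : ℕ} (ht : 0 < t) (hlo : 2 * t < 3 * T) (hhi : T ≤ t) :
    ∃ Enc : (Fin k → ZMod 2) → (Fin (k + 3 * t) → ZMod 2),
      (∀ u i, Enc u (Fin.castAdd (3 * t) i) = u i) ∧
      (∀ u v, hammingNorm u / T ≠ hammingNorm v / T →
        2 * t + 1 ≤ hammingDist (Enc u) (Enc v)) := by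
  have hT : 0 < T := by omega
  set A : ℕ → ZMod 2 := fun m => ((m : ZMod 2) + ((m / 2 : ℕ) : ZMod 2)) with hA
  set B : ℕ → ZMod 2 := fun m => (m : ZMod 2) with hB
  set C : ℕ → ZMod 2 := fun m => ((m / 2 : ℕ) : ZMod 2) with hC
  have hABC : ∀ m, A m = B m + C m := fun m => rfl
  have hcast : t + t + t = 3 * t := by ring
  set red : ℕ → Fin (3 * t) → ZMod 2 := fun m =>
    (Fin.append (Fin.append (fun _ : Fin t => A m) (fun _ : Fin t => B m))
      (fun _ : Fin t => C m)) ∘ (finCongr hcast.symm) with hred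
  refine ⟨fun u => Fin.append u (red (hammingNorm u / T)), ?_, ?_⟩
  · intro u i; simp [Fin.append_left]
  · intro u v hne
    set a := hammingNorm u / T with ha
    set b := hammingNorm v / T with hb
    have hwne : hammingNorm u ≠ hammingNorm v := fun h => hne (by rw [ha, hb, h])
    have huv : 1 ≤ hammingDist u v := by
      rw [Nat.one_le_iff_ne_zero, hammingDist_ne_zero]
      exact fun h => hwne (by rw [h])
    rw [hd_append, hred]
    simp only
    rw [hd_comp_equiv, hd_append, hd_append]
    simp only [← ha, ← hb]
    by_cases hmod : B a = B b ∧ C a = C b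
    · -- a ≡ b mod 4, so |a - b| ≥ 4, weight gap ≥ 3T + 1 ≥ 2t + 1
      obtain ⟨h1, h2⟩ := hmod
      have e1 : a % 2 = b % 2 := (ZMod.natCast_eq_natCast_iff a b 2).mp h1
      have e2 : a / 2 % 2 = b / 2 % 2 := (ZMod.natCast_eq_natCast_iff (a / 2) (b / 2) 2).mp h2
      have h5 : b * T ≤ hammingNorm v := by rw [hb]; exact Nat.div_mul_le_self _ _
      have h5' : a * T ≤ hammingNorm u := by rw [ha]; exact Nat.div_mul_le_self _ _
      have h6 : hammingNorm u < (a + 1) * T :=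
        (Nat.div_lt_iff_lt_mul hT).mp (by rw [← ha]; omega)
      have h6' : hammingNorm v < (b + 1) * T :=
        (Nat.div_lt_iff_lt_mul hT).mp (by rw [← hb]; omega)
      have d1 : hammingNorm v ≤ hammingNorm u + hammingDist u v := norm_le_norm_add_dist u v
      have d2 : hammingNorm u ≤ hammingNorm v + hammingDist u v := by
        rw [hammingDist_comm]; exact norm_le_norm_add_dist v u
      have key : 2 * t + 1 ≤ hammingDist u v := by
        rcases Nat.lt_or_ge a b with h | h
        · have hb4 : a + 4 ≤ b := by omega
          have hm : (a + 1) * T + 3 * T ≤ b * T := by nlinarith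
          linarith
        · have hb4 : b + 4 ≤ a := by omega
          have hm : (b + 1) * T + 3 * T ≤ a * T := by nlinarith
          linarith
      omega
    · -- codewords differ in at least two of the three blocks
      have htwo : (B a ≠ B b ∧ A a ≠ A b) ∨ (C a ≠ C b ∧ A a ≠ A b) ∨
          (B a ≠ B b ∧ C a ≠ C b) := by
        rcases not_and_or.mp hmod with h | h
        · by_cases hc : C a = C b
          · refine Or.inl ⟨h, fun he => h ?_⟩
            rw [hABC a, hABC b, hc] at he
            exact add_right_cancel he
          · exact Or.inr (Or.inr ⟨h, hc⟩)
        · by_cases hbb : B a = B b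
          · refine Or.inr (Or.inl ⟨h, fun he => h ?_⟩)
            rw [hABC a, hABC b, hbb] at he
            exact add_left_cancel he
          · exact Or.inr (Or.inr ⟨hbb, h⟩)
      rcases htwo with ⟨h1, h2⟩ | ⟨h1, h2⟩ | ⟨h1, h2⟩
      · rw [hd_const h1, hd_const h2]; omega
      · rw [hd_const h1, hd_const h2]; omega
      · rw [hd_const h1, hd_const h2]; omega
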